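/- Let m ∈ (1/2)ℤ_{>0} with m ∉ ℤ, let s ∈ (1/2)ℤ, and let a, b ∈ ℤ have different parity. Then for every τ with Im τ > 0 and all z₁, z₂ ∈ ℂ with z₁ ∉ ℤ + ℤτ one has Φ̃^{±[m;s]}(τ, z₁ + aτ, z₂ + bτ) = (±1)^a e^{−2πi m (b z₁ + a z₂)} q^{−mab} Φ̃^{±[m;s+1/2]}(τ, z₁, z₂), and Φ̃^{±[m;s]}(τ, z₁ + a, z₂ + b) = e^{2πi s a} Φ̃^{∓[m;s]}(τ, z₁, z₂). -/

import Mathlib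

noncomputable section

open Complex

/-- `mexp w = e^{2πi w}`. -/
def mexp (w : ℂ) : ℂ := Complex.exp (2 * (Real.pi : ℂ) * Complex.I * w)

/-- The signed mock theta function `Φ^{sgn[m;s]}(τ,z₁,z₂)`. -/
def PhiS (sgn : ℂ) (m s : ℝ) (τ z₁ z₂ : ℂ) : ℂ :=
  ∑' n : ℤ, sgn ^ n *
    mexp ((m : ℂ) * n * (z₁ + z₂) + (s : ℂ) * z₁ + τ * ((m : ℂ) * n ^ 2 + (s : ℂ) * n)) /
    (1 - mexp (z₁ + n * τ))

/-- The signed theta function `Θ^{sgn}_{j,m}(τ,z)`. -/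
def ThetaS (sgn : ℂ) (j m : ℝ) (τ z : ℂ) : ℂ :=
  ∑' n : ℤ, sgn ^ n *
    mexp ((m : ℂ) * z * ((n : ℂ) + ((j / (2 * m) : ℝ) : ℂ)) +
      τ * (m : ℂ) * ((n : ℂ) + ((j / (2 * m) : ℝ) : ℂ)) ^ 2)

/-- `E(x) = 2∫₀ˣ e^{-πu²} du`. -/
def Efun (x : ℝ) : ℝ := 2 * ∫ u in (0:ℝ)..x, Real.exp (-Real.pi * u ^ 2)

/-- `ψ_{m,n}(τ,z) = (n - 2m Im z / Im τ) √(Im τ / m)`. -/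
def psiMN (m n : ℝ) (τ z : ℂ) : ℝ := (n - 2 * m * z.im / τ.im) * Real.sqrt (τ.im / m)

/-- The real-analytic correction `R^{sgn}_{j,m}(τ,z)`; the summation variable `n ∈ j + 2mℤ`
is written as `n = j + 2mk`, `k ∈ ℤ`, so that `(±1)^{(n-j)/(2m)} = sgn^k`. -/
def RS (sgn : ℂ) (j m : ℝ) (τ z : ℂ) : ℂ :=
  ∑' k : ℤ, sgn ^ k *
    (((Real.sign (j + 2 * m * k - 1 / 2 - j + 2 * m) -
        Efun (psiMN m (j + 2 * m * k) τ z) : ℝ)) : ℂ) *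
    Complex.exp (-(Real.pi : ℂ) * Complex.I * (((j + 2 * m * k : ℝ)) : ℂ) ^ 2 * τ / (2 * (m : ℂ))
      + 2 * (Real.pi : ℂ) * Complex.I * (((j + 2 * m * k : ℝ)) : ℂ) * z)

/-- The modifier `Φ^{sgn[m;s]}_add`; the summation variable `j ∈ s + ℤ`, `s ≤ j < s + 2m`
is written as `j = s + i`, `0 ≤ i < ⌈2m⌉`. -/
def PhiAddS (sgn : ℂ) (m s : ℝ) (τ z₁ z₂ : ℂ) : ℂ :=
  ∑ i ∈ Finset.range ⌈2 * m⌉₊,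
    RS sgn (s + i) m τ ((z₁ - z₂) / 2) * ThetaS sgn (s + i) m τ (z₁ + z₂)

/-- The modified (signed) mock theta function `Φ̃^{sgn[m;s]}`. -/
def PhiTilde (sgn : ℂ) (m s : ℝ) (τ z₁ z₂ : ℂ) : ℂ :=
  PhiS sgn m s τ z₁ z₂ - (1 / 2) * PhiAddS sgn m s τ z₁ z₂

end

/-!
Shifting `(z₁, z₂)` by `(aτ, bτ)` and reindexing `n ↦ n - a` turns the series of `Φ^{[m;s]}` into
the stated factor times the series of `Φ^{[m;s']}` with `s' = s + m(b - a)`; the elliptic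
transformations of `R_{j,m}` and `Θ_{j,m}` do the same to the modifier. Since `2m(b - a)` is odd,
`s' ∈ s + 1/2 + ℤ`, and `Φ̃^{[m;s]}` only depends on `s` modulo `1`: raising `s` by one subtracts
`Σ_n (±1)^n e(mn(z₁+z₂) + sz₁) q^{mn² + sn}`, a multiple of `Θ_{s,m}(z₁ + z₂)`, from `Φ^{[m;s]}`,
while in `Φ_add` the window `s ≤ j < s + 2m` slides by one and
`R_{s+2m,m} = ±(R_{s,m} - 2 q^{-s²/4m} e^{πis(z₁-z₂)})` makes it drop by twice that.
Under real shifts the summands only pick up `e^{πi·2m(a+b)n} = (-1)^n`, which flips the sign.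
-/

noncomputable section

open Filter MeasureTheory
open scoped Real

lemma mexp_add (x y : ℂ) : mexp (x + y) = mexp x * mexp y := by
  rw [mexp, mexp, mexp, ← Complex.exp_add]
  congr 1
  ring

lemma mexp_ne_zero (w : ℂ) : mexp w ≠ 0 := Complex.exp_ne_zero _

lemma mexp_zpow (x : ℂ) (n : ℤ) : mexp x ^ n = mexp (n * x) := by
  rw [mexp, mexp, ← Complex.exp_int_mul]
  congr 1
  ring

lemma mexp_eq_one_iff (w : ℂ) : mexp w = 1 ↔ ∃ n : ℤ, w = n := by
  have h2πi : 2 * (π : ℂ) * Complex.I ≠ 0 := by simp [Real.pi_ne_zero]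
  simp only [mexp, Complex.exp_eq_one_iff]
  refine exists_congr fun n => ⟨fun h => mul_left_cancel₀ h2πi (by rw [h]; ring), ?_⟩
  rintro rfl; ring

lemma mexp_intCast (n : ℤ) : mexp n = 1 := (mexp_eq_one_iff _).2 ⟨n, rfl⟩

lemma mexp_odd_mul_half {c : ℤ} (hc : Odd c) (n : ℤ) : mexp (c * n / 2) = (-1) ^ n := by
  obtain ⟨k, rfl⟩ := hc
  have hhalf : mexp (1 / 2) = -1 := by
    rw [mexp, show 2 * (π : ℂ) * Complex.I * (1 / 2) = π * Complex.I by ring, Complex.exp_pi_mul_I]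
  rw [show ((2 * k + 1 : ℤ) : ℂ) * n / 2 = (k * n : ℤ) + n * (1 / 2) by push_cast; ring,
    mexp_add, mexp_intCast, one_mul, ← mexp_zpow, hhalf]

lemma norm_mexp (w : ℂ) : ‖mexp w‖ = Real.exp (-(2 * π) * w.im) := by
  rw [mexp, Complex.norm_exp]
  simp [Complex.mul_re]

lemma zpow_sub_of_sign {sgn : ℂ} (hsgn : sgn = 1 ∨ sgn = -1) (x y : ℤ) :
    sgn ^ (x - y) = sgn ^ x * sgn ^ y := by
  rcases hsgn with rfl | rfl
  · simp
  · rw [zpow_sub₀ (by norm_num), div_eq_mul_inv, ← inv_zpow, inv_neg, inv_one]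

lemma norm_eq_one_of_sign {sgn : ℂ} (hsgn : sgn = 1 ∨ sgn = -1) : ‖sgn‖ = 1 := by
  rcases hsgn with rfl | rfl <;> simp

lemma neg_zpow_eq_neg_one_zpow_mul (sgn : ℂ) (n : ℤ) : (-sgn) ^ n = (-1) ^ n * sgn ^ n := by
  rw [neg_eq_neg_one_mul, mul_zpow]

lemma summable_exp_quadratic {c : ℝ} (hc : 0 < c) (b d : ℝ) :
    Summable fun n : ℤ => Real.exp (-c * n ^ 2 + b * n + d) := by
  have hθ := (summable_jacobiTheta₂_term_iff ((-(b / (2 * π)) : ℝ) * Complex.I)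
    ((c / π : ℝ) * Complex.I)).2 (by simpa using div_pos hc Real.pi_pos)
  refine (hθ.norm.mul_left (Real.exp d)).congr fun n => ?_
  rw [norm_jacobiTheta₂_term, ← Real.exp_add]
  congr 1
  simp only [Complex.mul_I_im, Complex.ofReal_re]
  field_simp
  ring

lemma summable_exp_quadratic_comp_affine {A : ℝ} (hA : 0 < A) (B C p : ℝ) {q : ℝ} (hq : q ≠ 0) :
    Summable fun k : ℤ => Real.exp (-A * (p + q * k) ^ 2 + B * (p + q * k) + C) :=
  (summable_exp_quadratic (by positivity : 0 < A * q ^ 2) (B * q - 2 * A * p * q)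
    (C + B * p - A * p ^ 2)).congr fun k => by congr 1; ring

lemma integral_gaussian_pi : ∫ u : ℝ, Real.exp (-π * u ^ 2) = 1 := by
  rw [integral_gaussian, div_self Real.pi_ne_zero, Real.sqrt_one]

lemma one_sub_Efun (x : ℝ) : 1 - Efun x = 2 * ∫ u in Set.Ici x, Real.exp (-π * u ^ 2) := by
  have hint : Integrable fun u : ℝ => Real.exp (-π * u ^ 2) :=
    integrable_exp_neg_mul_sq Real.pi_pos
  have hsplit := intervalIntegral.integral_Ici_sub_Ici' (a := 0) (b := x)
    hint.integrableOn hint.integrableOn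
  rw [integral_Ici_eq_integral_Ioi, integral_gaussian_Ioi, div_self Real.pi_ne_zero,
    Real.sqrt_one] at hsplit
  rw [Efun, ← hsplit]
  ring

lemma integral_Ici_gaussian_le {x : ℝ} (hx : 0 ≤ x) :
    ∫ u in Set.Ici x, Real.exp (-π * u ^ 2) ≤ Real.exp (-π * x ^ 2) := by
  have hint : Integrable fun u : ℝ =>
      Real.exp (-π * x ^ 2) * Real.exp (-π * (u - x) ^ 2) :=
    ((integrable_exp_neg_mul_sq Real.pi_pos).comp_sub_right x).const_mul _
  calc ∫ u in Set.Ici x, Real.exp (-π * u ^ 2)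
      ≤ ∫ u in Set.Ici x, Real.exp (-π * x ^ 2) * Real.exp (-π * (u - x) ^ 2) := by
        refine setIntegral_mono_on
          (integrable_exp_neg_mul_sq Real.pi_pos).integrableOn hint.integrableOn
          measurableSet_Ici fun u hu => ?_
        rw [← Real.exp_add, Real.exp_le_exp]
        nlinarith [Real.pi_pos, mul_nonneg hx (sub_nonneg.2 (Set.mem_Ici.1 hu))]
    _ ≤ ∫ u, Real.exp (-π * x ^ 2) * Real.exp (-π * (u - x) ^ 2) :=
        setIntegral_le_integral hint
          (Eventually.of_forall fun u => by positivity)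
    _ = Real.exp (-π * x ^ 2) := by
        rw [integral_const_mul,
          integral_sub_right_eq_self (fun u => Real.exp (-π * u ^ 2)) x,
          integral_gaussian_pi, mul_one]

lemma Efun_neg (x : ℝ) : Efun (-x) = -Efun x := by
  have hreflect := intervalIntegral.integral_comp_neg (a := 0) (b := x)
    fun u => Real.exp (-π * u ^ 2)
  simp only [neg_sq, neg_zero] at hreflect
  rw [Efun, Efun, intervalIntegral.integral_symm, ← hreflect]
  ring

lemma abs_sign_sub_Efun_le {σ ψ : ℝ} (h : (0 ≤ ψ ∧ σ = 1) ∨ (ψ ≤ 0 ∧ σ = -1)) :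
    |σ - Efun ψ| ≤ 2 * Real.exp (-π * ψ ^ 2) := by
  have key : ∀ y, 0 ≤ y → |1 - Efun y| ≤ 2 * Real.exp (-π * y ^ 2) := fun y hy => by
    rw [one_sub_Efun, abs_of_nonneg (mul_nonneg zero_le_two
      (setIntegral_nonneg measurableSet_Ici fun u _ => (Real.exp_pos _).le))]
    linarith [integral_Ici_gaussian_le hy]
  rcases h with ⟨hψ, rfl⟩ | ⟨hψ, rfl⟩
  · exact key ψ hψ
  · have := key (-ψ) (neg_nonneg.2 hψ)
    rwa [Efun_neg, neg_sq, sub_neg_eq_add, ← abs_neg, neg_add'] at this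

lemma eventually_cofinite_affine_ge_or_le (p : ℝ) {q : ℝ} (hq : 0 < q) (lo hi : ℝ) :
    ∀ᶠ n : ℤ in cofinite, (0 ≤ n ∧ hi ≤ p + q * n) ∨ (n ≤ -1 ∧ p + q * n ≤ lo) := by
  rw [Int.cofinite_eq, eventually_sup]
  constructor
  · filter_upwards [eventually_le_atBot (-1), (tendsto_atBot_add_const_left _ p
      ((tendsto_intCast_atBot_iff.2 tendsto_id).const_mul_atBot hq)).eventually_le_atBot lo]
      with n h₁ h₂ using Or.inr ⟨h₁, h₂⟩
  · filter_upwards [eventually_ge_atTop 0, (tendsto_atTop_add_const_left _ p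
      ((tendsto_intCast_atTop_iff.2 tendsto_id).const_mul_atTop hq)).eventually_ge_atTop hi]
      with n h₁ h₂ using Or.inl ⟨h₁, h₂⟩

section PhiSummable

def phiNum (sgn : ℂ) (m s : ℝ) (τ z₁ z₂ : ℂ) (n : ℤ) : ℂ :=
  sgn ^ n * mexp ((m : ℂ) * n * (z₁ + z₂) + (s : ℂ) * z₁ + τ * ((m : ℂ) * n ^ 2 + (s : ℂ) * n))

variable {sgn : ℂ} {m : ℝ} {τ : ℂ}

lemma PhiS_eq_tsum (s : ℝ) (z₁ z₂ : ℂ) :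
    PhiS sgn m s τ z₁ z₂ = ∑' n : ℤ, phiNum sgn m s τ z₁ z₂ n / (1 - mexp (z₁ + n * τ)) := rfl

lemma phiNum_add_one (s : ℝ) (z₁ z₂ : ℂ) (n : ℤ) :
    phiNum sgn m (s + 1) τ z₁ z₂ n = phiNum sgn m s τ z₁ z₂ n * mexp (z₁ + n * τ) := by
  rw [phiNum, phiNum, mul_assoc (sgn ^ n), ← mexp_add]
  congr 2
  push_cast
  ring

lemma summable_phiNum (hsgn : ‖sgn‖ = 1) (hm : 0 < m) (hτ : 0 < τ.im) (s : ℝ) (z₁ z₂ : ℂ) :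
    Summable (phiNum sgn m s τ z₁ z₂) := by
  refine Summable.of_norm ((summable_exp_quadratic (by positivity : 0 < 2 * π * m * τ.im)
    (-(2 * π) * (m * (z₁.im + z₂.im) + s * τ.im)) (-(2 * π) * (s * z₁.im))).congr fun n => ?_)
  have harg : (m : ℂ) * n * (z₁ + z₂) + (s : ℂ) * z₁ + τ * ((m : ℂ) * n ^ 2 + (s : ℂ) * n) =
      ((m * n : ℝ) : ℂ) * (z₁ + z₂) + (s : ℂ) * z₁ + ((m * n ^ 2 + s * n : ℝ) : ℂ) * τ := by
    push_cast; ring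
  rw [phiNum, norm_mul, norm_zpow, hsgn, one_zpow, one_mul, norm_mexp, harg]
  congr 1
  simp only [Complex.add_im, Complex.im_ofReal_mul]
  ring

lemma eventually_norm_mexp_le_or_ge (hτ : 0 < τ.im) (z : ℂ) :
    ∀ᶠ n : ℤ in cofinite, ‖mexp (z + n * τ)‖ ≤ 1 / 2 ∨ 2 ≤ ‖mexp (z + n * τ)‖ := by
  have hπ : 2 ≤ Real.exp π := by linarith [Real.add_one_le_exp π, Real.pi_gt_three]
  filter_upwards [eventually_cofinite_affine_ge_or_le z.im hτ (-1 / 2) (1 / 2)] with n hn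
  have hnorm : ‖mexp (z + n * τ)‖ = Real.exp (-(2 * π) * (z.im + τ.im * n)) := by
    simp [norm_mexp, mul_comm]
  rw [hnorm]
  rcases hn with ⟨-, hn⟩ | ⟨-, hn⟩
  · left
    calc Real.exp (-(2 * π) * (z.im + τ.im * n)) ≤ Real.exp (-π) :=
          Real.exp_le_exp.2 (by nlinarith [Real.pi_pos])
      _ ≤ 1 / 2 := by
          rw [Real.exp_neg, inv_le_comm₀ (Real.exp_pos π) (by norm_num)]
          linarith
  · right
    exact hπ.trans (Real.exp_le_exp.2 (by nlinarith [Real.pi_pos]))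

lemma norm_div_one_sub_le (x : ℂ) {w : ℂ} (hw : ‖w‖ ≤ 1 / 2 ∨ 2 ≤ ‖w‖) :
    ‖x / (1 - w)‖ ≤ 2 * ‖x‖ + 2 * ‖x / w‖ := by
  rw [norm_div, norm_div]
  rcases hw with hw | hw
  · have hden : 1 / 2 ≤ ‖1 - w‖ := by linarith [norm_sub_norm_le (1 : ℂ) w, norm_one (α := ℂ)]
    calc ‖x‖ / ‖1 - w‖ ≤ ‖x‖ / (1 / 2) :=
          div_le_div_of_nonneg_left (norm_nonneg _) (by norm_num) hden
      _ ≤ 2 * ‖x‖ + 2 * (‖x‖ / ‖w‖) := by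
          have := div_nonneg (norm_nonneg x) (norm_nonneg w)
          linarith
  · have hden : ‖w‖ / 2 ≤ ‖1 - w‖ := by
      linarith [norm_sub_norm_le w 1, norm_sub_rev w 1, norm_one (α := ℂ)]
    calc ‖x‖ / ‖1 - w‖ ≤ ‖x‖ / (‖w‖ / 2) :=
          div_le_div_of_nonneg_left (norm_nonneg _) (by positivity) hden
      _ ≤ 2 * ‖x‖ + 2 * (‖x‖ / ‖w‖) := by
          rw [div_div_eq_mul_div, mul_comm, mul_div_assoc]
          linarith [norm_nonneg x]

lemma summable_phiS_summand (hsgn : ‖sgn‖ = 1) (hm : 0 < m) (hτ : 0 < τ.im) (s : ℝ)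
    (z₁ z₂ : ℂ) :
    Summable fun n : ℤ => phiNum sgn m s τ z₁ z₂ n / (1 - mexp (z₁ + n * τ)) := by
  refine Summable.of_norm_bounded_eventually
    (((summable_phiNum hsgn hm hτ s z₁ z₂).norm.mul_left 2).add
      ((summable_phiNum hsgn hm hτ (s - 1) z₁ z₂).norm.mul_left 2)) ?_
  filter_upwards [eventually_norm_mexp_le_or_ge hτ z₁] with n hn
  have hnum := phiNum_add_one (sgn := sgn) (m := m) (τ := τ) (s - 1) z₁ z₂ n
  rw [sub_add_cancel] at hnum
  calc _ ≤ 2 * ‖phiNum sgn m s τ z₁ z₂ n‖ + 2 * ‖phiNum sgn m s τ z₁ z₂ n / mexp (z₁ + n * τ)‖ :=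
        norm_div_one_sub_le _ hn
    _ = _ := by rw [hnum, mul_div_cancel_right₀ _ (mexp_ne_zero _), ← hnum]

end PhiSummable

section RSIndex

def rsExp (m x : ℝ) (τ z : ℂ) : ℂ :=
  Complex.exp (-(π : ℂ) * Complex.I * (x : ℂ) ^ 2 * τ / (2 * (m : ℂ)) +
    2 * (π : ℂ) * Complex.I * (x : ℂ) * z)

def rsTerm (sgn : ℂ) (j m : ℝ) (τ z : ℂ) (k : ℤ) : ℂ :=
  sgn ^ k * ((Real.sign (j + 2 * m * k - 1 / 2 - j + 2 * m) -
    Efun (psiMN m (j + 2 * m * k) τ z) : ℝ) : ℂ) * rsExp m (j + 2 * m * k) τ z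

variable {sgn : ℂ} {m : ℝ} {τ : ℂ}

lemma RS_eq_tsum (j : ℝ) (z : ℂ) : RS sgn j m τ z = ∑' k : ℤ, rsTerm sgn j m τ z k := rfl

lemma norm_rsExp (x : ℝ) (z : ℂ) :
    ‖rsExp m x τ z‖ = Real.exp (π * x ^ 2 / (2 * m) * τ.im - 2 * π * x * z.im) := by
  have harg : -(π : ℂ) * Complex.I * (x : ℂ) ^ 2 * τ / (2 * (m : ℂ)) +
      2 * (π : ℂ) * Complex.I * (x : ℂ) * z =
      ((-(π * x ^ 2 / (2 * m)) : ℝ) : ℂ) * (τ * Complex.I) +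
        ((2 * π * x : ℝ) : ℂ) * (z * Complex.I) := by
    push_cast; ring
  rw [rsExp, Complex.norm_exp, harg]
  congr 1
  simp only [Complex.add_re, Complex.re_ofReal_mul, Complex.mul_I_re]
  ring

lemma norm_rsTerm_le (hsgn : ‖sgn‖ = 1) (hm : 1 / 4 < m) (hτ : 0 < τ.im) (j : ℝ) (z : ℂ) {k : ℤ}
    (hk : (0 ≤ k ∧ 2 * m * z.im / τ.im ≤ j + 2 * m * k) ∨
      (k ≤ -1 ∧ j + 2 * m * k ≤ 2 * m * z.im / τ.im)) :
    ‖rsTerm sgn j m τ z k‖ ≤ 2 * Real.exp (-(π * τ.im / (2 * m)) * (j + 2 * m * k) ^ 2 +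
      2 * π * z.im * (j + 2 * m * k) + -(4 * π * m * z.im ^ 2 / τ.im)) := by
  set n := j + 2 * m * k
  have hψsq : psiMN m n τ z ^ 2 = (n - 2 * m * z.im / τ.im) ^ 2 * (τ.im / m) := by
    rw [psiMN, mul_pow, Real.sq_sqrt (by positivity)]
  have hsign : |Real.sign (j + 2 * m * k - 1 / 2 - j + 2 * m) - Efun (psiMN m n τ z)| ≤
      2 * Real.exp (-π * psiMN m n τ z ^ 2) := by
    refine abs_sign_sub_Efun_le ?_
    rcases hk with ⟨hk, hβ⟩ | ⟨hk, hβ⟩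
    · have hk' : (0 : ℝ) ≤ k := by exact_mod_cast hk
      exact Or.inl ⟨mul_nonneg (by linarith) (Real.sqrt_nonneg _), Real.sign_of_pos (by nlinarith)⟩
    · have hk' : (k : ℝ) ≤ -1 := by exact_mod_cast hk
      exact Or.inr ⟨mul_nonpos_of_nonpos_of_nonneg (by linarith) (Real.sqrt_nonneg _),
        Real.sign_of_neg (by nlinarith)⟩
  rw [rsTerm, norm_mul, norm_mul, norm_zpow, hsgn, one_zpow, one_mul, Complex.norm_real,
    Real.norm_eq_abs, norm_rsExp]
  calc _ ≤ 2 * Real.exp (-π * psiMN m n τ z ^ 2) *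
        Real.exp (π * n ^ 2 / (2 * m) * τ.im - 2 * π * n * z.im) :=
        mul_le_mul_of_nonneg_right hsign (Real.exp_pos _).le
    _ = _ := by
        rw [mul_assoc, ← Real.exp_add, hψsq]
        congr 2
        field_simp
        ring

lemma summable_rsTerm (hsgn : ‖sgn‖ = 1) (hm : 1 / 4 < m) (hτ : 0 < τ.im) (j : ℝ) (z : ℂ) :
    Summable (rsTerm sgn j m τ z) := by
  refine Summable.of_norm_bounded_eventually
    ((summable_exp_quadratic_comp_affine (by positivity : 0 < π * τ.im / (2 * m)) (2 * π * z.im)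
      (-(4 * π * m * z.im ^ 2 / τ.im)) j (by positivity : 2 * m ≠ 0)).mul_left 2) ?_
  filter_upwards [eventually_cofinite_affine_ge_or_le j (by positivity : 0 < 2 * m)
    (2 * m * z.im / τ.im) (2 * m * z.im / τ.im)] with k hk
  exact norm_rsTerm_le hsgn hm hτ j z hk

lemma sign_sub_sign_eq_ite (hm : 1 / 4 < m) (k : ℤ) :
    Real.sign (2 * m * k - 1 / 2) - Real.sign (2 * m * k + 2 * m - 1 / 2) =
      if k = 0 then -2 else 0 := by
  rcases lt_trichotomy k 0 with hk | rfl | hk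
  · have hk' : (k : ℝ) ≤ -1 := by exact_mod_cast Int.le_sub_one_of_lt hk
    rw [if_neg hk.ne, Real.sign_of_neg (by nlinarith), Real.sign_of_neg (by nlinarith), sub_self]
  · rw [if_pos rfl, Int.cast_zero, Real.sign_of_neg (by linarith), Real.sign_of_pos (by linarith)]
    norm_num
  · have hk' : (1 : ℝ) ≤ k := by exact_mod_cast hk
    rw [if_neg hk.ne', Real.sign_of_pos (by nlinarith), Real.sign_of_pos (by nlinarith), sub_self]

lemma mul_rsTerm_add_two_mul (hsgn : sgn ≠ 0) (hm : 1 / 4 < m) (x : ℝ) (z : ℂ) (k : ℤ) :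
    sgn * rsTerm sgn (x + 2 * m) m τ z (k - 1) =
      rsTerm sgn x m τ z k + if k = 0 then -2 * rsExp m x τ z else 0 := by
  have hn : x + 2 * m + 2 * m * ((k - 1 : ℤ) : ℝ) = x + 2 * m * k := by push_cast; ring
  rw [rsTerm, rsTerm, hn, ← mul_assoc, ← mul_assoc, ← zpow_one_add₀ hsgn, add_sub_cancel,
    show x + 2 * m * k - 1 / 2 - (x + 2 * m) + 2 * m = 2 * m * k - 1 / 2 by ring,
    show x + 2 * m * k - 1 / 2 - x + 2 * m = 2 * m * k + 2 * m - 1 / 2 by ring,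
    eq_add_of_sub_eq (sign_sub_sign_eq_ite hm k)]
  split_ifs with hk
  · subst hk
    simp only [Int.cast_zero, mul_zero, add_zero, zpow_zero]
    push_cast
    ring
  · push_cast; ring

lemma RS_index_add_two_mul (hsgn : ‖sgn‖ = 1) (hm : 1 / 4 < m) (hτ : 0 < τ.im) (x : ℝ) (z : ℂ) :
    sgn * RS sgn (x + 2 * m) m τ z = RS sgn x m τ z - 2 * rsExp m x τ z := by
  have hsgn₀ : sgn ≠ 0 := by rintro rfl; simp at hsgn
  rw [RS_eq_tsum, RS_eq_tsum, ← tsum_mul_left, ← (Equiv.subRight 1).tsum_eq]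
  simp only [Equiv.subRight_apply, mul_rsTerm_add_two_mul hsgn₀ hm]
  rw [(summable_rsTerm hsgn hm hτ x z).tsum_add (hasSum_ite_eq 0 _).summable, tsum_ite_eq]
  ring

end RSIndex

section EllipticTau

variable {sgn : ℂ} {m : ℝ} {τ : ℂ}

lemma ThetaS_add_mul_tau (hm : m ≠ 0) (j u : ℝ) (z : ℂ) :
    ThetaS sgn j m τ (z + u * τ) =
      mexp (-(τ * ((m : ℂ) * u ^ 2 / 4)) - (m : ℂ) * u / 2 * z) * ThetaS sgn (j + m * u) m τ z := by
  rw [ThetaS, ThetaS, ← tsum_mul_left]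
  congr 1; funext n
  rw [mul_left_comm, ← mexp_add]
  congr 2
  have hm' : (m : ℂ) ≠ 0 := Complex.ofReal_ne_zero.2 hm
  push_cast
  field_simp
  ring

lemma ThetaS_index_add_two_mul_int (hsgn : sgn = 1 ∨ sgn = -1) (hm : m ≠ 0) (j : ℝ) (r : ℤ)
    (z : ℂ) : ThetaS sgn (j + 2 * m * r) m τ z = sgn ^ r * ThetaS sgn j m τ z := by
  rw [ThetaS, ThetaS, ← tsum_mul_left, ← (Equiv.subRight r).tsum_eq]
  congr 1; funext n
  have hm' : (m : ℂ) ≠ 0 := Complex.ofReal_ne_zero.2 hm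
  have hindex : ((n - r : ℤ) : ℂ) + (((j + 2 * m * r) / (2 * m) : ℝ) : ℂ) =
      n + ((j / (2 * m) : ℝ) : ℂ) := by
    push_cast; field_simp; ring
  rw [Equiv.subRight_apply, zpow_sub_of_sign hsgn, hindex]
  ring

lemma RS_add_mul_tau (hm : m ≠ 0) (hτ : τ.im ≠ 0) (j c : ℝ) (z : ℂ) :
    RS sgn j m τ (z + c * τ) =
      mexp (τ * ((m : ℂ) * c ^ 2) + 2 * (m : ℂ) * c * z) * RS sgn (j - 2 * m * c) m τ z := by
  rw [RS_eq_tsum, RS_eq_tsum, ← tsum_mul_left]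
  congr 1; funext k
  have hψ : psiMN m (j + 2 * m * k) τ (z + c * τ) = psiMN m (j - 2 * m * c + 2 * m * k) τ z := by
    simp only [psiMN, Complex.add_im, Complex.im_ofReal_mul]
    field_simp
    ring
  have hexp : rsExp m (j + 2 * m * k) τ (z + c * τ) =
      mexp (τ * ((m : ℂ) * c ^ 2) + 2 * (m : ℂ) * c * z) *
        rsExp m (j - 2 * m * c + 2 * m * k) τ z := by
    have hm' : (m : ℂ) ≠ 0 := Complex.ofReal_ne_zero.2 hm
    rw [rsExp, rsExp, mexp, ← Complex.exp_add]
    congr 1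
    push_cast
    field_simp
    ring
  rw [rsTerm, rsTerm, hψ, hexp,
    show j - 2 * m * c + 2 * m * k - 1 / 2 - (j - 2 * m * c) + 2 * m =
      j + 2 * m * k - 1 / 2 - j + 2 * m by ring]
  ring

lemma PhiS_add_mul_tau (hsgn : sgn = 1 ∨ sgn = -1) (s : ℝ) (a b : ℤ) (z₁ z₂ : ℂ) :
    PhiS sgn m s τ (z₁ + a * τ) (z₂ + b * τ) =
      sgn ^ a * mexp (-(m : ℂ) * (b * z₁ + a * z₂)) * mexp (τ * (-((m : ℂ) * a * b))) *
        PhiS sgn m (s + m * (b - a)) τ z₁ z₂ := by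
  rw [PhiS_eq_tsum, PhiS_eq_tsum, ← tsum_mul_left, ← (Equiv.subRight a).tsum_eq]
  congr 1; funext k
  rw [Equiv.subRight_apply, phiNum, phiNum, zpow_sub_of_sign hsgn,
    show z₁ + a * τ + ((k - a : ℤ) : ℂ) * τ = z₁ + k * τ by push_cast; ring]
  have hexp : mexp ((m : ℂ) * ((k - a : ℤ) : ℂ) * (z₁ + a * τ + (z₂ + b * τ)) +
        (s : ℂ) * (z₁ + a * τ) +
        τ * ((m : ℂ) * ((k - a : ℤ) : ℂ) ^ 2 + (s : ℂ) * ((k - a : ℤ) : ℂ))) =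
      mexp (-(m : ℂ) * (b * z₁ + a * z₂)) * mexp (τ * (-((m : ℂ) * a * b))) *
        mexp ((m : ℂ) * k * (z₁ + z₂) + ((s + m * (b - a) : ℝ) : ℂ) * z₁ +
          τ * ((m : ℂ) * k ^ 2 + ((s + m * (b - a) : ℝ) : ℂ) * k)) := by
    rw [← mexp_add, ← mexp_add]
    congr 1
    push_cast
    ring
  rw [hexp]
  ring

lemma PhiAddS_add_mul_tau (hsgn : sgn = 1 ∨ sgn = -1) (hm : m ≠ 0) (hτ : τ.im ≠ 0) (s : ℝ)
    (a b : ℤ) (z₁ z₂ : ℂ) :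
    PhiAddS sgn m s τ (z₁ + a * τ) (z₂ + b * τ) =
      sgn ^ a * mexp (-(m : ℂ) * (b * z₁ + a * z₂)) * mexp (τ * (-((m : ℂ) * a * b))) *
        PhiAddS sgn m (s + m * (b - a)) τ z₁ z₂ := by
  rw [PhiAddS, PhiAddS, Finset.mul_sum]
  refine Finset.sum_congr rfl fun i _ => ?_
  have hdiff : (z₁ + a * τ - (z₂ + b * τ)) / 2 = (z₁ - z₂) / 2 + (((a - b) / 2 : ℝ) : ℂ) * τ := by
    push_cast; ring
  have hsum : z₁ + a * τ + (z₂ + b * τ) = z₁ + z₂ + ((a + b : ℝ) : ℂ) * τ := by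
    push_cast; ring
  have hj : s + i + m * (a + b) = s + m * (b - a) + i + 2 * m * a := by ring
  rw [hdiff, hsum, RS_add_mul_tau hm hτ, ThetaS_add_mul_tau hm, hj,
    ThetaS_index_add_two_mul_int hsgn hm,
    show s + i - 2 * m * ((a - b) / 2) = s + m * (b - a) + i by ring]
  have hfactor : mexp (τ * ((m : ℂ) * (((a - b) / 2 : ℝ) : ℂ) ^ 2) +
        2 * (m : ℂ) * (((a - b) / 2 : ℝ) : ℂ) * ((z₁ - z₂) / 2)) *
      mexp (-(τ * ((m : ℂ) * ((a + b : ℝ) : ℂ) ^ 2 / 4)) -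
        (m : ℂ) * ((a + b : ℝ) : ℂ) / 2 * (z₁ + z₂)) =
      mexp (-(m : ℂ) * (b * z₁ + a * z₂)) * mexp (τ * (-((m : ℂ) * a * b))) := by
    rw [← mexp_add, ← mexp_add]
    congr 1
    push_cast
    ring
  rw [mul_assoc (sgn ^ a), ← hfactor]
  ring

lemma PhiTilde_add_mul_tau (hsgn : sgn = 1 ∨ sgn = -1) (hm : m ≠ 0) (hτ : τ.im ≠ 0) (s : ℝ)
    (a b : ℤ) (z₁ z₂ : ℂ) :
    PhiTilde sgn m s τ (z₁ + a * τ) (z₂ + b * τ) =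
      sgn ^ a * mexp (-(m : ℂ) * (b * z₁ + a * z₂)) * mexp (τ * (-((m : ℂ) * a * b))) *
        PhiTilde sgn m (s + m * (b - a)) τ z₁ z₂ := by
  rw [PhiTilde, PhiTilde, PhiS_add_mul_tau hsgn, PhiAddS_add_mul_tau hsgn hm hτ]
  ring

end EllipticTau

section IndexShift

variable {sgn : ℂ} {m : ℝ} {τ z₁ z₂ : ℂ}

lemma tsum_phiNum (hm : m ≠ 0) (s : ℝ) :
    ∑' n : ℤ, phiNum sgn m s τ z₁ z₂ n =
      rsExp m s τ ((z₁ - z₂) / 2) * ThetaS sgn s m τ (z₁ + z₂) := by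
  rw [ThetaS, ← tsum_mul_left]
  congr 1; funext n
  have hm' : (m : ℂ) ≠ 0 := Complex.ofReal_ne_zero.2 hm
  rw [phiNum, rsExp, mexp, mexp, mul_left_comm, ← Complex.exp_add]
  congr 2
  push_cast
  field_simp
  ring

lemma PhiS_index_add_one (hsgn : ‖sgn‖ = 1) (hm : 0 < m) (hτ : 0 < τ.im)
    (hz : ∀ n : ℤ, mexp (z₁ + n * τ) ≠ 1) (s : ℝ) :
    PhiS sgn m (s + 1) τ z₁ z₂ = PhiS sgn m s τ z₁ z₂ - ∑' n : ℤ, phiNum sgn m s τ z₁ z₂ n := by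
  rw [PhiS_eq_tsum, PhiS_eq_tsum,
    ← (summable_phiS_summand hsgn hm hτ s z₁ z₂).tsum_sub (summable_phiNum hsgn hm hτ s z₁ z₂)]
  congr 1; funext n
  rw [phiNum_add_one]
  field_simp [sub_ne_zero.2 (hz n).symm]
  ring

lemma PhiAddS_index_add_one (hsgn : sgn = 1 ∨ sgn = -1) (hm : 0 < m) {N : ℕ} (hN : 2 * m = N)
    (hτ : 0 < τ.im) (s : ℝ) :
    PhiAddS sgn m (s + 1) τ z₁ z₂ =
      PhiAddS sgn m s τ z₁ z₂ - 2 * ∑' n : ℤ, phiNum sgn m s τ z₁ z₂ n := by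
  set G : ℝ → ℂ := fun x => RS sgn x m τ ((z₁ - z₂) / 2) * ThetaS sgn x m τ (z₁ + z₂)
  have hquarter : 1 / 4 < m := by
    have : (1 : ℝ) ≤ N := Nat.one_le_cast.2 (Nat.cast_pos.1 (by rw [← hN]; positivity))
    linarith
  have hG : G (s + N) = G s - 2 * ∑' n : ℤ, phiNum sgn m s τ z₁ z₂ n := by
    have hΘ := ThetaS_index_add_two_mul_int hsgn hm.ne' s 1 (τ := τ) (z₁ + z₂)
    rw [Int.cast_one, mul_one, zpow_one] at hΘ
    simp only [G]
    rw [← hN, hΘ, tsum_phiNum hm.ne', ← mul_assoc, mul_comm _ sgn,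
      RS_index_add_two_mul (norm_eq_one_of_sign hsgn) hquarter hτ]
    ring
  have hshift : ∑ i ∈ Finset.range N, G (s + 1 + i) =
      ∑ i ∈ Finset.range N, G (s + i) + G (s + N) - G s := by
    have h₁ := Finset.sum_range_succ' (fun i : ℕ => G (s + i)) N
    rw [Finset.sum_range_succ, Nat.cast_zero, add_zero] at h₁
    simp only [Nat.cast_add, Nat.cast_one, ← add_assoc, add_right_comm s _ (1 : ℝ)] at h₁
    rw [h₁]
    ring
  simp only [PhiAddS, hN, Nat.ceil_natCast]
  exact hshift.trans (by rw [hG]; ring)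

lemma PhiTilde_index_add_one (hsgn : sgn = 1 ∨ sgn = -1) (hm : 0 < m) {N : ℕ} (hN : 2 * m = N)
    (hτ : 0 < τ.im) (hz : ∀ n : ℤ, mexp (z₁ + n * τ) ≠ 1) (s : ℝ) :
    PhiTilde sgn m (s + 1) τ z₁ z₂ = PhiTilde sgn m s τ z₁ z₂ := by
  rw [PhiTilde, PhiTilde, PhiS_index_add_one (norm_eq_one_of_sign hsgn) hm hτ hz,
    PhiAddS_index_add_one hsgn hm hN hτ]
  ring

lemma PhiTilde_index_add_int (hsgn : sgn = 1 ∨ sgn = -1) (hm : 0 < m) {N : ℕ} (hN : 2 * m = N)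
    (hτ : 0 < τ.im) (hz : ∀ n : ℤ, mexp (z₁ + n * τ) ≠ 1) (s : ℝ) (t : ℤ) :
    PhiTilde sgn m (s + t) τ z₁ z₂ = PhiTilde sgn m s τ z₁ z₂ := by
  induction t using Int.induction_on with
  | zero => simp
  | succ k ih =>
    rw [show s + ((k + 1 : ℤ) : ℝ) = s + (k : ℤ) + 1 by push_cast; ring,
      PhiTilde_index_add_one hsgn hm hN hτ hz, ih]
  | pred k ih =>
    rw [← ih, show s + ((-k : ℤ) : ℝ) = s + ((-k - 1 : ℤ) : ℝ) + 1 by push_cast; ring,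
      PhiTilde_index_add_one hsgn hm hN hτ hz]

end IndexShift

section EllipticReal

variable {sgn : ℂ} {m : ℝ} {τ : ℂ} {M : ℤ}

lemma ThetaS_add_int (hM : Odd M) (hm : 2 * m = M) {v : ℤ} (hv : Odd v) (j : ℝ) (z : ℂ) :
    ThetaS sgn j m τ (z + v) = mexp (j * v / 2) * ThetaS (-sgn) j m τ z := by
  have hmC : 2 * (m : ℂ) = M := by exact_mod_cast hm
  have hm₀ : (m : ℂ) ≠ 0 := by
    rintro h
    rw [h, mul_zero, eq_comm, Int.cast_eq_zero] at hmC
    simp [hmC] at hM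
  rw [ThetaS, ThetaS, ← tsum_mul_left]
  congr 1; funext n
  set q : ℂ := ((j / (2 * m) : ℝ) : ℂ)
  have hq : (m : ℂ) * v * (n + q) = (M * v : ℤ) * n / 2 + j * v / 2 := by
    simp only [q]; push_cast; field_simp; linear_combination (v * n : ℂ) * hmC
  rw [show (m : ℂ) * (z + v) * (n + q) + τ * m * (n + q) ^ 2 =
      (m * z * (n + q) + τ * m * (n + q) ^ 2) + m * v * (n + q) by ring,
    mexp_add _ ((m : ℂ) * v * (n + q)), hq, mexp_add ((M * v : ℤ) * n / 2),
    neg_zpow_eq_neg_one_zpow_mul, mexp_odd_mul_half (hM.mul hv)]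
  ring

lemma RS_add_half_int (hM : Odd M) (hm : 2 * m = M) {v : ℤ} (hv : Odd v) (j : ℝ) (z : ℂ) :
    RS sgn j m τ (z + v / 2) = mexp (j * v / 2) * RS (-sgn) j m τ z := by
  have hmC : 2 * (m : ℂ) = M := by exact_mod_cast hm
  rw [RS_eq_tsum, RS_eq_tsum, ← tsum_mul_left]
  congr 1; funext k
  have hψ : psiMN m (j + 2 * m * k) τ (z + v / 2) = psiMN m (j + 2 * m * k) τ z := by
    simp [psiMN]
  have hexp : rsExp m (j + 2 * m * k) τ (z + v / 2) =
      mexp (j * v / 2) * mexp ((M * v : ℤ) * k / 2) * rsExp m (j + 2 * m * k) τ z := by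
    rw [rsExp, rsExp, mexp, mexp, ← Complex.exp_add, ← Complex.exp_add]
    congr 1
    push_cast
    linear_combination (π * Complex.I * v * k : ℂ) * hmC
  rw [rsTerm, rsTerm, hψ, hexp, neg_zpow_eq_neg_one_zpow_mul, mexp_odd_mul_half (hM.mul hv)]
  ring

lemma PhiS_add_int (hM : Odd M) (hm : 2 * m = M) {a b : ℤ} (hab : Odd (a + b)) (s : ℝ)
    (z₁ z₂ : ℂ) : PhiS sgn m s τ (z₁ + a) (z₂ + b) = mexp (s * a) * PhiS (-sgn) m s τ z₁ z₂ := by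
  have hmC : 2 * (m : ℂ) = M := by exact_mod_cast hm
  rw [PhiS_eq_tsum, PhiS_eq_tsum, ← tsum_mul_left]
  congr 1; funext n
  have hden : mexp (z₁ + a + n * τ) = mexp (z₁ + n * τ) := by
    rw [add_right_comm, mexp_add, mexp_intCast, mul_one]
  have hnum : phiNum sgn m s τ (z₁ + a) (z₂ + b) n =
      mexp (s * a) * mexp ((M * (a + b) : ℤ) * n / 2) * phiNum sgn m s τ z₁ z₂ n := by
    rw [phiNum, phiNum, ← mexp_add, mul_left_comm, ← mexp_add]
    congr 2
    push_cast
    linear_combination ((a + b) * n / 2 : ℂ) * hmC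
  rw [hden, hnum, phiNum, phiNum, neg_zpow_eq_neg_one_zpow_mul, mexp_odd_mul_half (hM.mul hab)]
  ring

lemma PhiAddS_add_int (hM : Odd M) (hm : 2 * m = M) {a b : ℤ} (hab : Odd (a + b)) (s : ℝ)
    (z₁ z₂ : ℂ) :
    PhiAddS sgn m s τ (z₁ + a) (z₂ + b) = mexp (s * a) * PhiAddS (-sgn) m s τ z₁ z₂ := by
  have hab' : Odd (a - b) := by rw [Int.odd_iff] at *; omega
  rw [PhiAddS, PhiAddS, Finset.mul_sum]
  refine Finset.sum_congr rfl fun i _ => ?_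
  have hfactor : mexp (((s + i : ℝ) : ℂ) * ((a - b : ℤ) : ℂ) / 2) *
      mexp (((s + i : ℝ) : ℂ) * ((a + b : ℤ) : ℂ) / 2) = mexp (s * a) := by
    rw [← mexp_add, show ((s + i : ℝ) : ℂ) * ((a - b : ℤ) : ℂ) / 2 +
        ((s + i : ℝ) : ℂ) * ((a + b : ℤ) : ℂ) / 2 = (s * a : ℂ) + ((i * a : ℤ) : ℂ) by
      push_cast; ring, mexp_add, mexp_intCast, mul_one]
  rw [show (z₁ + a - (z₂ + b)) / 2 = (z₁ - z₂) / 2 + ((a - b : ℤ) : ℂ) / 2 by push_cast; ring,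
    show z₁ + a + (z₂ + b) = z₁ + z₂ + ((a + b : ℤ) : ℂ) by push_cast; ring,
    RS_add_half_int hM hm hab', ThetaS_add_int hM hm hab, ← hfactor]
  ring

lemma PhiTilde_add_int (hM : Odd M) (hm : 2 * m = M) {a b : ℤ} (hab : Odd (a + b)) (s : ℝ)
    (z₁ z₂ : ℂ) :
    PhiTilde sgn m s τ (z₁ + a) (z₂ + b) = mexp (s * a) * PhiTilde (-sgn) m s τ z₁ z₂ := by
  rw [PhiTilde, PhiTilde, PhiS_add_int hM hm hab, PhiAddS_add_int hM hm hab]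
  ring

end EllipticReal

end

/-- Here `m = m2 / 2` with `m2` odd, `s = s2 / 2`, `q^{-mab} = mexp (τ * (-(m*a*b)))`,
and `∓` is `-sgn`. -/
theorem stmt7 (m2 : ℤ) (hm2 : 0 < m2) (hm2odd : Odd m2) (s2 : ℤ)
    (sgn : ℂ) (hsgn : sgn = 1 ∨ sgn = -1)
    (a b : ℤ) (hab : a % 2 ≠ b % 2)
    (τ z₁ z₂ : ℂ) (hτ : 0 < τ.im) (hz : ∀ x y : ℤ, z₁ ≠ (x : ℂ) + (y : ℂ) * τ) :
    PhiTilde sgn ((m2 : ℝ) / 2) ((s2 : ℝ) / 2) τ (z₁ + a * τ) (z₂ + b * τ) =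
      sgn ^ a * mexp (-((m2 : ℂ) / 2) * ((b : ℂ) * z₁ + (a : ℂ) * z₂)) *
        mexp (τ * (-((m2 : ℂ) / 2 * a * b))) *
        PhiTilde sgn ((m2 : ℝ) / 2) ((s2 : ℝ) / 2 + 1 / 2) τ z₁ z₂ ∧
    PhiTilde sgn ((m2 : ℝ) / 2) ((s2 : ℝ) / 2) τ (z₁ + a) (z₂ + b) =
      mexp ((s2 : ℂ) / 2 * a) * PhiTilde (-sgn) ((m2 : ℝ) / 2) ((s2 : ℝ) / 2) τ z₁ z₂ := by
  have hm : 2 * ((m2 : ℝ) / 2) = m2 := by ring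
  have hm₀ : (0 : ℝ) < (m2 : ℝ) / 2 := by positivity
  have hN : 2 * ((m2 : ℝ) / 2) = (m2.toNat : ℕ) := by
    rw [hm]; exact_mod_cast (Int.toNat_of_nonneg hm2.le).symm
  have hz' : ∀ n : ℤ, mexp (z₁ + n * τ) ≠ 1 := fun n h => by
    obtain ⟨k, hk⟩ := (mexp_eq_one_iff _).1 h
    exact hz k (-n) (by push_cast; linear_combination hk)
  obtain ⟨t, ht⟩ := hm2odd.mul (Int.odd_iff.2 (by omega) : Odd (b - a))
  have hindex : (s2 : ℝ) / 2 + (m2 : ℝ) / 2 * (b - a) = (s2 : ℝ) / 2 + 1 / 2 + t := by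
    have := congrArg (fun x : ℤ => (x : ℝ)) ht
    push_cast at this
    linarith
  constructor
  · rw [PhiTilde_add_mul_tau hsgn hm₀.ne' hτ.ne', hindex, PhiTilde_index_add_int hsgn hm₀ hN hτ hz']
    push_cast
    ring
  · rw [PhiTilde_add_int hm2odd hm (Int.odd_iff.2 (by omega))]
    push_cast
    ring
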